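/- arXiv:1402.5009 — 7 statements merged into one kernel-verified Lean document; each statement's English description precedes it below -/
import Mathlib

section
/- If there is a constant C > 0 such that √γ_k ≤ C(√γ_{k−j} + √γ_j) for all k, j ∈ ℤ, then for all u, v ∈ H_γ(𝕋) with Fourier coefficients in ℓ¹, one has |uv|_γ ≤ C'(|u|_γ ‖v̂‖_{ℓ¹} + |v|_γ ‖û‖_{ℓ¹}) for some constant C' depending only on C. -/
/-!
The hypothesis lets the weight `√γ` pass through the convolution pointwise:
`√γ_k |(û ⋆ v̂)(k)| ≤ C ((√γ |û|) ⋆ |v̂| + (√γ |v̂|) ⋆ |û|)(k)`.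
Minkowski's inequality in `ℓ²` and Young's inequality `‖a ⋆ b‖_{ℓ²} ≤ ‖a‖_{ℓ²} ‖b‖_{ℓ¹}` then
give the claim with `C' = C`. The estimates are carried out in `ℝ≥0∞`, where every series
converges; summability is only needed to return to `ℝ`.
-/

open ENNReal MeasureTheory

/-- Fourier coefficients of a product: convolution. -/
noncomputable def fourierConv (u v : ℤ → ℂ) (k : ℤ) : ℂ := ∑' j : ℤ, u (k - j) * v j

namespace ENNReal

variable {ι : Type*}

theorem sq_rpow_inv_two (x : ℝ≥0∞) : (x ^ 2) ^ (2⁻¹ : ℝ) = x := by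
  simpa using pow_rpow_inv_natCast two_ne_zero x

theorem rpow_inv_two_sq (x : ℝ≥0∞) : (x ^ (2⁻¹ : ℝ)) ^ 2 = x := by
  simpa using rpow_inv_natCast_pow two_ne_zero x

theorem sq_tsum_mul_le_tsum_sq_mul_mul_tsum (a b : ι → ℝ≥0∞) :
    (∑' i, a i * b i) ^ 2 ≤ (∑' i, a i ^ 2 * b i) * ∑' i, b i := by
  let _ : MeasurableSpace ι := ⊤
  have h := lintegral_mul_norm_pow_le (μ := Measure.count) (f := fun i => a i ^ 2 * b i) (g := b)
    measurable_from_top.aemeasurable measurable_from_top.aemeasurable (p := 2⁻¹) (q := 2⁻¹)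
    (by norm_num) (by norm_num) (by norm_num)
  simp only [lintegral_count' measurable_from_top] at h
  have hab : ∀ i, (a i ^ 2 * b i) ^ (2⁻¹ : ℝ) * b i ^ (2⁻¹ : ℝ) = a i * b i := fun i => by
    rw [← mul_rpow_of_nonneg _ _ (by norm_num), mul_assoc, ← sq, ← mul_pow, sq_rpow_inv_two]
  simp only [hab] at h
  calc (∑' i, a i * b i) ^ 2
      ≤ ((∑' i, a i ^ 2 * b i) ^ (2⁻¹ : ℝ) * (∑' i, b i) ^ (2⁻¹ : ℝ)) ^ 2 := by gcongr
    _ = (∑' i, a i ^ 2 * b i) * ∑' i, b i := by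
      rw [mul_pow, rpow_inv_two_sq, rpow_inv_two_sq]

theorem tsum_add_sq_rpow_le (f g : ι → ℝ≥0∞) :
    (∑' i, (f i + g i) ^ 2) ^ (2⁻¹ : ℝ) ≤
      (∑' i, f i ^ 2) ^ (2⁻¹ : ℝ) + (∑' i, g i ^ 2) ^ (2⁻¹ : ℝ) := by
  let _ : MeasurableSpace ι := ⊤
  simpa [lintegral_count' measurable_from_top, rpow_two] using
    lintegral_Lp_add_le (μ := Measure.count) measurable_from_top.aemeasurable
      measurable_from_top.aemeasurable (f := f) (g := g) (p := 2) one_le_two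

theorem ofReal_sqrt_tsum_mul_norm_sq {E : Type*} [SeminormedAddGroup E] {γ : ι → ℝ}
    (hγ : ∀ k, 0 ≤ γ k) {x : ι → E} (hx : Summable fun k => γ k * ‖x k‖ ^ 2) :
    ENNReal.ofReal √(∑' k, γ k * ‖x k‖ ^ 2) =
      (∑' k, (ENNReal.ofReal √(γ k) * ‖x k‖ₑ) ^ 2) ^ (2⁻¹ : ℝ) := by
  have term (k : ι) : ENNReal.ofReal (γ k * ‖x k‖ ^ 2) = (ENNReal.ofReal √(γ k) * ‖x k‖ₑ) ^ 2 := by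
    rw [← ofReal_norm, ← ofReal_mul (Real.sqrt_nonneg _), ← ofReal_pow (by positivity), mul_pow,
      Real.sq_sqrt (hγ k)]
  have hterm (k : ι) : 0 ≤ γ k * ‖x k‖ ^ 2 := mul_nonneg (hγ k) (sq_nonneg _)
  rw [Real.sqrt_eq_rpow, ← ofReal_rpow_of_nonneg (tsum_nonneg hterm) (by norm_num),
    ofReal_tsum_of_nonneg hterm hx, one_div]
  simp_rw [term]

theorem ofReal_sqrt_tsum_mul_norm_sq_le {E : Type*} [SeminormedAddGroup E] {γ : ι → ℝ}
    (hγ : ∀ k, 0 ≤ γ k) (x : ι → E) :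
    ENNReal.ofReal √(∑' k, γ k * ‖x k‖ ^ 2) ≤
      (∑' k, (ENNReal.ofReal √(γ k) * ‖x k‖ₑ) ^ 2) ^ (2⁻¹ : ℝ) := by
  by_cases hx : Summable fun k => γ k * ‖x k‖ ^ 2
  · exact (ofReal_sqrt_tsum_mul_norm_sq hγ hx).le
  · simp [tsum_eq_zero_of_not_summable hx]

theorem ofReal_tsum_norm {E : Type*} [SeminormedAddGroup E] {x : ι → E}
    (hx : Summable fun k => ‖x k‖) : ENNReal.ofReal (∑' k, ‖x k‖) = ∑' k, ‖x k‖ₑ := by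
  simp only [ofReal_tsum_of_nonneg (fun k => norm_nonneg _) hx, ofReal_norm]

end ENNReal

section Convolution

variable {G : Type*}

noncomputable def tsumConv [Sub G] (a b : G → ℝ≥0∞) (k : G) : ℝ≥0∞ := ∑' j, a (k - j) * b j

theorem tsumConv_comm [AddCommGroup G] (a b : G → ℝ≥0∞) : tsumConv a b = tsumConv b a := by
  ext k
  calc tsumConv a b k = ∑' j, a (k - (k - j)) * b (k - j) :=
        ((Equiv.subLeft k).tsum_eq (fun j => a (k - j) * b j)).symm
    _ = tsumConv b a k := by simp only [_root_.sub_sub_cancel, mul_comm, tsumConv]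

theorem tsum_tsumConv_sq_le [AddGroup G] (a b : G → ℝ≥0∞) :
    ∑' k, tsumConv a b k ^ 2 ≤ (∑' k, a k ^ 2) * (∑' j, b j) ^ 2 :=
  calc ∑' k, tsumConv a b k ^ 2
      ≤ ∑' k, (∑' j, a (k - j) ^ 2 * b j) * ∑' j, b j :=
        ENNReal.tsum_le_tsum fun k => sq_tsum_mul_le_tsum_sq_mul_mul_tsum _ _
    _ = (∑' j, (∑' k, a (k - j) ^ 2) * b j) * ∑' j, b j := by
        rw [ENNReal.tsum_mul_right, ENNReal.tsum_comm]
        simp_rw [← ENNReal.tsum_mul_right]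
    _ = (∑' k, a k ^ 2) * (∑' j, b j) ^ 2 := by
        have shift (j : G) : ∑' k, a (k - j) ^ 2 = ∑' k, a k ^ 2 :=
          (Equiv.subRight j).tsum_eq fun k => a k ^ 2
        rw [tsum_congr fun j => by rw [shift j], ENNReal.tsum_mul_left]
        ring

theorem tsum_tsumConv_sq_rpow_le [AddGroup G] (a b : G → ℝ≥0∞) :
    (∑' k, tsumConv a b k ^ 2) ^ (2⁻¹ : ℝ) ≤ (∑' k, a k ^ 2) ^ (2⁻¹ : ℝ) * ∑' j, b j := by
  grw [tsum_tsumConv_sq_le, mul_rpow_of_nonneg _ _ (by norm_num), sq_rpow_inv_two]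

def IsQuasiSubadditive [Sub G] (c : ℝ≥0∞) (w : G → ℝ≥0∞) : Prop :=
  ∀ k j, w k ≤ c * (w (k - j) + w j)

theorem IsQuasiSubadditive.mul_tsumConv_le [AddCommGroup G] {c : ℝ≥0∞} {w : G → ℝ≥0∞}
    (hw : IsQuasiSubadditive c w) (a b : G → ℝ≥0∞) (k : G) :
    w k * tsumConv a b k ≤ c * (tsumConv (w * a) b k + tsumConv (w * b) a k) :=
  calc w k * tsumConv a b k = ∑' j, w k * (a (k - j) * b j) := ENNReal.tsum_mul_left.symm
    _ ≤ ∑' j, c * ((w * a) (k - j) * b j + a (k - j) * (w * b) j) := by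
        refine ENNReal.tsum_le_tsum fun j => ?_
        calc w k * (a (k - j) * b j) ≤ c * (w (k - j) + w j) * (a (k - j) * b j) := by
              gcongr; exact hw k j
          _ = c * ((w * a) (k - j) * b j + a (k - j) * (w * b) j) := by
              simp only [Pi.mul_apply]; ring
    _ = c * (tsumConv (w * a) b k + tsumConv (w * b) a k) := by
        rw [ENNReal.tsum_mul_left, ENNReal.tsum_add, tsumConv_comm (w * b)]
        rfl

theorem IsQuasiSubadditive.tsum_mul_tsumConv_sq_rpow_le [AddCommGroup G] {c : ℝ≥0∞}
    {w : G → ℝ≥0∞} (hw : IsQuasiSubadditive c w) (a b : G → ℝ≥0∞) :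
    (∑' k, (w k * tsumConv a b k) ^ 2) ^ (2⁻¹ : ℝ) ≤
      c * ((∑' k, (w k * a k) ^ 2) ^ (2⁻¹ : ℝ) * ∑' j, b j +
        (∑' k, (w k * b k) ^ 2) ^ (2⁻¹ : ℝ) * ∑' j, a j) :=
  calc (∑' k, (w k * tsumConv a b k) ^ 2) ^ (2⁻¹ : ℝ)
      ≤ (∑' k, (c * (tsumConv (w * a) b k + tsumConv (w * b) a k)) ^ 2) ^ (2⁻¹ : ℝ) := by
        gcongr (∑' k, ?_ ^ 2) ^ _ with k
        exact hw.mul_tsumConv_le a b k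
    _ = c * (∑' k, (tsumConv (w * a) b k + tsumConv (w * b) a k) ^ 2) ^ (2⁻¹ : ℝ) := by
        simp_rw [mul_pow, ENNReal.tsum_mul_left]
        rw [mul_rpow_of_nonneg _ _ (by norm_num), sq_rpow_inv_two]
    _ ≤ c * ((∑' k, tsumConv (w * a) b k ^ 2) ^ (2⁻¹ : ℝ) +
          (∑' k, tsumConv (w * b) a k ^ 2) ^ (2⁻¹ : ℝ)) := by
        gcongr; exact tsum_add_sq_rpow_le _ _
    _ ≤ _ := by gcongr <;> exact tsum_tsumConv_sq_rpow_le _ _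

end Convolution

theorem enorm_fourierConv_le (u v : ℤ → ℂ) (k : ℤ) :
    ‖fourierConv u v k‖ₑ ≤ tsumConv (‖u ·‖ₑ) (‖v ·‖ₑ) k :=
  enorm_tsum_le_tsum_enorm.trans_eq (by simp only [enorm_mul, tsumConv])

/-- If `√γ k ≤ C (√γ (k-j) + √γ j)` for all `k, j`, then
`|uv|_γ ≤ C' (|u|_γ ‖v̂‖_{ℓ¹} + |v|_γ ‖û‖_{ℓ¹})` for some `C'` depending only on `C`. -/
theorem stmt3 (C : ℝ) (hC : 0 < C) :
    ∃ C' > 0, ∀ γ : ℤ → ℝ, (∀ k, 0 < γ k) →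
      (∀ k j : ℤ, Real.sqrt (γ k) ≤ C * (Real.sqrt (γ (k - j)) + Real.sqrt (γ j))) →
      ∀ u v : ℤ → ℂ,
        Summable (fun k => γ k * ‖u k‖ ^ 2) → Summable (fun k => γ k * ‖v k‖ ^ 2) →
        Summable (fun k => ‖u k‖) → Summable (fun k => ‖v k‖) →
        Real.sqrt (∑' k : ℤ, γ k * ‖fourierConv u v k‖ ^ 2) ≤
          C' * (Real.sqrt (∑' k : ℤ, γ k * ‖u k‖ ^ 2) * (∑' k : ℤ, ‖v k‖) +
                Real.sqrt (∑' k : ℤ, γ k * ‖v k‖ ^ 2) * (∑' k : ℤ, ‖u k‖)) := by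
  refine ⟨C, hC, fun γ hγ hquasi u v hu2 hv2 hu1 hv1 => ?_⟩
  have hγ₀ (k : ℤ) : 0 ≤ γ k := (hγ k).le
  have hw : IsQuasiSubadditive (ENNReal.ofReal C) fun k => ENNReal.ofReal √(γ k) := fun k j => by
    rw [← ofReal_add (by positivity) (by positivity), ← ofReal_mul hC.le]
    exact ofReal_le_ofReal (hquasi k j)
  rw [← ofReal_le_ofReal_iff (by positivity)]
  calc ENNReal.ofReal √(∑' k, γ k * ‖fourierConv u v k‖ ^ 2)
      ≤ (∑' k, (ENNReal.ofReal √(γ k) * ‖fourierConv u v k‖ₑ) ^ 2) ^ (2⁻¹ : ℝ) :=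
        ofReal_sqrt_tsum_mul_norm_sq_le hγ₀ _
    _ ≤ (∑' k, (ENNReal.ofReal √(γ k) * tsumConv (‖u ·‖ₑ) (‖v ·‖ₑ) k) ^ 2) ^ (2⁻¹ : ℝ) := by
        gcongr (∑' k, (_ * ?_) ^ 2) ^ _ with k
        exact enorm_fourierConv_le u v k
    _ ≤ _ := hw.tsum_mul_tsumConv_sq_rpow_le _ _
    _ = _ := by
        rw [← ofReal_sqrt_tsum_mul_norm_sq hγ₀ hu2, ← ofReal_sqrt_tsum_mul_norm_sq hγ₀ hv2,
          ← ofReal_tsum_norm hu1, ← ofReal_tsum_norm hv1, ofReal_mul hC.le,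
          ofReal_add (by positivity) (by positivity), ofReal_mul (Real.sqrt_nonneg _),
          ofReal_mul (Real.sqrt_nonneg _)]
end

section
/- If √γ_k ≤ C(√γ_{k−j} + √γ_j) for all k, j ∈ ℤ and ∑_{k∈ℤ} 1/γ_k < ∞, then H_γ(𝕋) is a Banach algebra: there exists C̃ > 0 with |uv|_γ ≤ C̃ |u|_γ |v|_γ for all u, v ∈ H_γ(𝕋). -/
/-!
With `a = √γ ‖û‖` and `b = √γ ‖v̂‖`, the hypothesis on `√γ` gives coefficientwise
`√γ_k ‖(û ⋆ v̂)_k‖ ≤ C ((a ⋆ ‖v̂‖)_k + (b ⋆ ‖û‖)_k)`. Young's inequality `ℓ² ⋆ ℓ¹ ⊆ ℓ²` bounds both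
convolutions, and Cauchy–Schwarz against `∑ 1/γ_k < ∞` embeds `H_γ` into `ℓ¹`:
`∑ ‖û_k‖ ≤ (∑ 1/γ_k)^{1/2} |u|_γ`. This gives `C̃ = 2 C (∑ 1/γ_k)^{1/2}`.
-/

open scoped ENNReal

section Sequences

variable {ι : Type*}

theorem memℓp_two_iff_summable_sq {f : ι → ℝ} : Memℓp f 2 ↔ Summable fun i => f i ^ 2 := by
  rw [memℓp_gen_iff (by norm_num)]
  norm_num [Real.norm_eq_abs, sq_abs]

theorem lp.norm_two_eq_sqrt_tsum_sq (f : lp (fun _ : ι => ℝ) 2) : ‖f‖ = √(∑' i, f i ^ 2) := by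
  rw [lp.norm_eq_tsum_rpow (by norm_num), Real.sqrt_eq_rpow]
  norm_num [Real.norm_eq_abs, sq_abs]

theorem summable_sq_and_sqrt_tsum_sq_le_norm {g : ι → ℝ} (G : lp (fun _ : ι => ℝ) 2)
    (hg : ∀ i, 0 ≤ g i) (hgG : ∀ i, g i ≤ G i) :
    Summable (fun i => g i ^ 2) ∧ √(∑' i, g i ^ 2) ≤ ‖G‖ := by
  have hsq : ∀ i, g i ^ 2 ≤ G i ^ 2 := fun i => pow_le_pow_left₀ (hg i) (hgG i) 2
  have hG : Summable fun i => G i ^ 2 := memℓp_two_iff_summable_sq.1 G.2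
  have hgs : Summable fun i => g i ^ 2 := hG.of_nonneg_of_le (fun i => sq_nonneg _) hsq
  refine ⟨hgs, ?_⟩
  rw [lp.norm_two_eq_sqrt_tsum_sq]
  exact Real.sqrt_le_sqrt (hgs.tsum_le_tsum hsq hG)

theorem summable_mul_and_tsum_mul_le_sqrt_mul_sqrt {f g : ι → ℝ} (hf : ∀ i, 0 ≤ f i)
    (hg : ∀ i, 0 ≤ g i) (hf2 : Summable fun i => f i ^ 2) (hg2 : Summable fun i => g i ^ 2) :
    Summable (fun i => f i * g i) ∧
      ∑' i, f i * g i ≤ √(∑' i, f i ^ 2) * √(∑' i, g i ^ 2) := by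
  have := Real.summable_and_inner_le_Lp_mul_Lq_tsum_of_nonneg .two_two hf hg
    (by simpa using hf2) (by simpa using hg2)
  simpa [Real.sqrt_eq_rpow] using this

theorem summable_norm_and_tsum_norm_le_of_summable_weighted_sq {E : Type*} [SeminormedAddGroup E]
    {γ : ι → ℝ} (hγ : ∀ i, 0 < γ i) (hsum : Summable fun i => 1 / γ i) {u : ι → E}
    (hu : Summable fun i => γ i * ‖u i‖ ^ 2) :
    Summable (fun i => ‖u i‖) ∧
      ∑' i, ‖u i‖ ≤ √(∑' i, 1 / γ i) * √(∑' i, γ i * ‖u i‖ ^ 2) := by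
  have hsplit : (fun i => √(1 / γ i) * (√(γ i) * ‖u i‖)) = fun i => ‖u i‖ := funext fun i => by
    rw [← mul_assoc, ← Real.sqrt_mul (one_div_pos.2 (hγ i)).le, one_div_mul_cancel (hγ i).ne',
      Real.sqrt_one, one_mul]
  have hsq₁ : ∀ i, √(1 / γ i) ^ 2 = 1 / γ i := fun i => Real.sq_sqrt (one_div_pos.2 (hγ i)).le
  have hsq₂ : ∀ i, (√(γ i) * ‖u i‖) ^ 2 = γ i * ‖u i‖ ^ 2 := fun i => by
    rw [mul_pow, Real.sq_sqrt (hγ i).le]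
  have hcs := summable_mul_and_tsum_mul_le_sqrt_mul_sqrt (f := fun i => √(1 / γ i))
    (g := fun i => √(γ i) * ‖u i‖) (fun i => Real.sqrt_nonneg _) (fun i => by positivity)
    (by simpa only [hsq₁] using hsum) (by simpa only [hsq₂] using hu)
  simpa only [hsplit, hsq₁, hsq₂] using hcs

end Sequences

-- Minkowski: `a ⋆ w = ∑ⱼ w j • (a translated by j)`, an absolutely convergent series in `ℓ²`.
theorem exists_lp_hasSum_conv_le {G : Type*} [AddGroup G] {a w : G → ℝ}
    (ha : Summable fun k => a k ^ 2) (hw : Summable fun j => ‖w j‖) :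
    ∃ F : lp (fun _ : G => ℝ) 2, (∀ k, HasSum (fun j => a (k - j) * w j) (F k)) ∧
      ‖F‖ ≤ √(∑' k, a k ^ 2) * ∑' j, ‖w j‖ := by
  have hshift : ∀ j, HasSum (fun k => (a (k - j) * w j) ^ 2) ((∑' k, a k ^ 2) * w j ^ 2) :=
    fun j => by
      simpa only [mul_pow, Function.comp_def, Equiv.subRight_apply] using
        ((Equiv.subRight j).hasSum_iff.2 ha.hasSum).mul_right (w j ^ 2)
  let A : G → lp (fun _ : G => ℝ) 2 := fun j =>
    ⟨fun k => a (k - j) * w j, memℓp_two_iff_summable_sq.2 (hshift j).summable⟩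
  have hA : ∀ j, ‖A j‖ = √(∑' k, a k ^ 2) * ‖w j‖ := fun j => by
    rw [lp.norm_two_eq_sqrt_tsum_sq, (hshift j).tsum_eq,
      Real.sqrt_mul (tsum_nonneg fun _ => sq_nonneg _), Real.sqrt_sq_eq_abs, Real.norm_eq_abs]
  have hAsum : Summable fun j => ‖A j‖ := by simpa only [hA] using hw.mul_left _
  refine ⟨∑' j, A j, fun k => ?_, ?_⟩
  · have : Fact ((1 : ℝ≥0∞) ≤ 2) := ⟨one_le_two⟩
    exact (hAsum.of_norm.hasSum).mapL (lp.evalCLM ℝ (fun _ : G => ℝ) 2 k)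
  · calc ‖∑' j, A j‖ ≤ ∑' j, ‖A j‖ := norm_tsum_le_tsum_norm hAsum
      _ = √(∑' k, a k ^ 2) * ∑' j, ‖w j‖ := by simp only [hA, tsum_mul_left]

theorem summable_norm_mul_norm_comp_sub {G E : Type*} [AddGroup G] [SeminormedAddGroup E]
    {u v : G → E} (hu : Summable fun i => ‖u i‖) (hv : Summable fun i => ‖v i‖) (k : G) :
    Summable fun j => ‖u (k - j)‖ * ‖v j‖ :=
  (hv.mul_left (∑' i, ‖u i‖)).of_nonneg_of_le (fun j => by positivity) fun j =>
    mul_le_mul_of_nonneg_right (hu.le_tsum (k - j) fun _ _ => norm_nonneg _) (norm_nonneg _)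

theorem sqrt_mul_norm_fourierConv_le {γ : ℤ → ℝ} {C : ℝ}
    (hsub : ∀ k j : ℤ, √(γ k) ≤ C * (√(γ (k - j)) + √(γ j))) {u v : ℤ → ℂ}
    (hu : Summable fun i => ‖u i‖) (hv : Summable fun i => ‖v i‖) {k : ℤ} {s t : ℝ}
    (hs : HasSum (fun j => √(γ (k - j)) * ‖u (k - j)‖ * ‖v j‖) s)
    (ht : HasSum (fun j => √(γ (k - j)) * ‖v (k - j)‖ * ‖u j‖) t) :
    √(γ k) * ‖fourierConv u v k‖ ≤ C * (s + t) := by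
  have huv := summable_norm_mul_norm_comp_sub hu hv k
  have ht' : HasSum (fun j => ‖u (k - j)‖ * (√(γ j) * ‖v j‖)) t := by
    rw [← (Equiv.subLeft k).hasSum_iff] at ht
    convert ht using 2 with j
    simp only [Function.comp_apply, Equiv.subLeft_apply, sub_sub_cancel]
    ring
  have hconv : ‖fourierConv u v k‖ ≤ ∑' j, ‖u (k - j)‖ * ‖v j‖ := by
    simpa only [fourierConv, norm_mul] using
      norm_tsum_le_tsum_norm (f := fun j => u (k - j) * v j) (by simpa only [norm_mul] using huv)
  refine (mul_le_mul_of_nonneg_left hconv (Real.sqrt_nonneg _)).trans ?_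
  refine hasSum_le (fun j => ?_) (huv.hasSum.mul_left (√(γ k))) ((hs.add ht').mul_left C)
  calc √(γ k) * (‖u (k - j)‖ * ‖v j‖)
      ≤ C * (√(γ (k - j)) + √(γ j)) * (‖u (k - j)‖ * ‖v j‖) :=
        mul_le_mul_of_nonneg_right (hsub k j) (by positivity)
    _ = _ := by ring

/-- If `√γ k ≤ C (√γ (k-j) + √γ j)` and `∑ 1/γ k < ∞`, then `H_γ` is an
algebra: there is `C̃ > 0` with `uv ∈ H_γ` and `|uv|_γ ≤ C̃ |u|_γ |v|_γ` for all `u, v ∈ H_γ`. -/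
theorem stmt4 (γ : ℤ → ℝ) (hγ : ∀ k, 0 < γ k) (C : ℝ) (hC : 0 < C)
    (hsub : ∀ k j : ℤ, Real.sqrt (γ k) ≤ C * (Real.sqrt (γ (k - j)) + Real.sqrt (γ j)))
    (hsum : Summable fun k => 1 / γ k) :
    ∃ Ctilde > 0, ∀ u v : ℤ → ℂ,
      Summable (fun k => γ k * ‖u k‖ ^ 2) → Summable (fun k => γ k * ‖v k‖ ^ 2) →
      Summable (fun k => γ k * ‖fourierConv u v k‖ ^ 2) ∧
      Real.sqrt (∑' k : ℤ, γ k * ‖fourierConv u v k‖ ^ 2) ≤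
        Ctilde * Real.sqrt (∑' k : ℤ, γ k * ‖u k‖ ^ 2) *
          Real.sqrt (∑' k : ℤ, γ k * ‖v k‖ ^ 2) := by
  set S := ∑' k, 1 / γ k
  have hS : 0 < S := hsum.tsum_pos (fun k => (one_div_pos.2 (hγ k)).le) 0 (one_div_pos.2 (hγ 0))
  refine ⟨2 * C * √S, by positivity, fun u v hu hv => ?_⟩
  have hweight : ∀ (w : ℤ → ℂ) k, (√(γ k) * ‖w k‖) ^ 2 = γ k * ‖w k‖ ^ 2 := fun w k => by
    rw [mul_pow, Real.sq_sqrt (hγ k).le]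
  obtain ⟨hu₁, hu₁_le⟩ := summable_norm_and_tsum_norm_le_of_summable_weighted_sq hγ hsum hu
  obtain ⟨hv₁, hv₁_le⟩ := summable_norm_and_tsum_norm_le_of_summable_weighted_sq hγ hsum hv
  obtain ⟨F₁, hF₁, hF₁_le⟩ := exists_lp_hasSum_conv_le (a := fun k => √(γ k) * ‖u k‖)
    (w := fun k => ‖v k‖)
    (by simpa only [hweight] using hu) (by simpa only [norm_norm] using hv₁)
  obtain ⟨F₂, hF₂, hF₂_le⟩ := exists_lp_hasSum_conv_le (a := fun k => √(γ k) * ‖v k‖)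
    (w := fun k => ‖u k‖)
    (by simpa only [hweight] using hv) (by simpa only [norm_norm] using hu₁)
  obtain ⟨hsumm, hle⟩ := summable_sq_and_sqrt_tsum_sq_le_norm (C • (F₁ + F₂))
    (fun k => by positivity) fun k => sqrt_mul_norm_fourierConv_le hsub hu₁ hv₁ (hF₁ k) (hF₂ k)
  simp only [hweight, norm_norm] at hsumm hle hF₁_le hF₂_le
  refine ⟨hsumm, hle.trans ?_⟩
  calc ‖C • (F₁ + F₂)‖ ≤ C * (‖F₁‖ + ‖F₂‖) := by
        rw [norm_smul, Real.norm_of_nonneg hC.le]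
        exact mul_le_mul_of_nonneg_left (norm_add_le _ _) hC.le
    _ ≤ C * (√(∑' k, γ k * ‖u k‖ ^ 2) * (√S * √(∑' k, γ k * ‖v k‖ ^ 2)) +
          √(∑' k, γ k * ‖v k‖ ^ 2) * (√S * √(∑' k, γ k * ‖u k‖ ^ 2))) := by
        gcongr
        · exact hF₁_le.trans (mul_le_mul_of_nonneg_left hv₁_le (Real.sqrt_nonneg _))
        · exact hF₂_le.trans (mul_le_mul_of_nonneg_left hu₁_le (Real.sqrt_nonneg _))
    _ = _ := by ring
end

section
/- Let γ_k > 0 for all k and u₀ ∈ H_δ(𝕋) where δ_k = (1+k²)²/γ_k. Then the solution of the linear damped BBM equation satisfies ‖u(t)‖_{H¹}² ≤ min( (e^{−1}/(2t)) |u₀|_δ², ‖u₀‖_{H¹}² ) for all t > 0. -/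
/-!
Each mode decays at the rate `β_k = γ_k / (1 + k²)`, so `‖u(t)‖_{H¹}²` is the sum of
`(1 + k²) e^{-2β_k t} |û_k(0)|²`. Bounding `e^{-2β_k t}` by `1` gives the `H¹` bound, and bounding
`β_k e^{-2β_k t}` by `e⁻¹ / (2t)` (from `y e^{-y} ≤ e⁻¹`) trades the factor `1 + k²` for
`δ_k = (1 + k²)² / γ_k` at the price of `e⁻¹ / (2t)`.
-/

open Real

lemma mul_exp_neg_two_mul_mul_le (β : ℝ) {t : ℝ} (ht : 0 < t) :
    β * exp (-(2 * β * t)) ≤ exp (-1) / (2 * t) := by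
  rw [le_div_iff₀ (by positivity)]
  calc β * exp (-(2 * β * t)) * (2 * t) = 2 * β * t * exp (-(2 * β * t)) := by ring
    _ ≤ exp (-1) := mul_exp_neg_le_exp_neg_one _

lemma mul_exp_neg_two_mul_div_le {γ w t : ℝ} (hγ : 0 < γ) (hw : w ≠ 0) (ht : 0 < t) :
    w * exp (-(2 * (γ / w) * t)) ≤ exp (-1) / (2 * t) * (w ^ 2 / γ) := by
  calc w * exp (-(2 * (γ / w) * t)) = γ / w * exp (-(2 * (γ / w) * t)) * (w ^ 2 / γ) := by
        field_simp
    _ ≤ exp (-1) / (2 * t) * (w ^ 2 / γ) :=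
        mul_le_mul_of_nonneg_right (mul_exp_neg_two_mul_mul_le _ ht) (by positivity)

lemma exp_neg_two_mul_div_le_one {γ w t : ℝ} (hγ : 0 ≤ γ) (hw : 0 ≤ w) (ht : 0 ≤ t) :
    exp (-(2 * (γ / w) * t)) ≤ 1 :=
  exp_le_one_iff.mpr (neg_nonpos.mpr (by positivity))

lemma norm_sq_cexp_bbm_mode_mul (γ t : ℝ) (k : ℤ) (z : ℂ) :
    ‖Complex.exp (-(((γ : ℂ) + Complex.I * (k : ℂ)) / (1 + (k : ℂ) ^ 2)) * t) * z‖ ^ 2 =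
      exp (-(2 * (γ / (1 + (k : ℝ) ^ 2)) * t)) * ‖z‖ ^ 2 := by
  have hcast : (1 + (k : ℂ) ^ 2) = ((1 + (k : ℝ) ^ 2 : ℝ) : ℂ) := by push_cast; ring
  rw [norm_mul, Complex.norm_exp, hcast, mul_pow, ← exp_nat_mul]
  simp only [Complex.mul_re, Complex.neg_re, Complex.div_ofReal_re, Complex.add_re,
    Complex.ofReal_re, Complex.I_re, Complex.I_im, Complex.ofReal_im, Complex.neg_im,
    Complex.div_ofReal_im, Complex.add_im, Complex.intCast_re, Complex.intCast_im]
  congr 2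
  ring

/-- With `γ k > 0` and `u₀ ∈ H_δ`, `δ k = (1+k²)²/γ k`, the mode-wise
solution of linear damped BBM satisfies
`‖u(t)‖_{H¹}² ≤ min((e⁻¹/(2t)) |u₀|_δ², ‖u₀‖_{H¹}²)` for all `t > 0`. -/
theorem stmt7 (γ : ℤ → ℝ) (hγ : ∀ k, 0 < γ k) (u : ℝ → ℤ → ℂ) (u₀ : ℤ → ℂ)
    (hsol : ∀ t k, u t k =
      Complex.exp (-(((γ k : ℂ) + Complex.I * (k : ℂ)) / (1 + (k : ℂ) ^ 2)) * t) * u₀ k)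
    (hδ : Summable fun k : ℤ => ((1 + (k : ℝ) ^ 2) ^ 2 / γ k) * ‖u₀ k‖ ^ 2)
    (hH1 : Summable fun k : ℤ => (1 + (k : ℝ) ^ 2) * ‖u₀ k‖ ^ 2) :
    ∀ t > 0, (∑' k : ℤ, (1 + (k : ℝ) ^ 2) * ‖u t k‖ ^ 2) ≤
      min ((Real.exp (-1) / (2 * t)) * ∑' k : ℤ, ((1 + (k : ℝ) ^ 2) ^ 2 / γ k) * ‖u₀ k‖ ^ 2)
        (∑' k : ℤ, (1 + (k : ℝ) ^ 2) * ‖u₀ k‖ ^ 2) := by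
  intro t ht
  have hmode : ∀ k : ℤ, (1 + (k : ℝ) ^ 2) * ‖u t k‖ ^ 2 =
      (1 + (k : ℝ) ^ 2) * exp (-(2 * (γ k / (1 + (k : ℝ) ^ 2)) * t)) * ‖u₀ k‖ ^ 2 := fun k => by
    rw [hsol, norm_sq_cexp_bbm_mode_mul, ← mul_assoc]
  have hH1_bound : ∀ k : ℤ, (1 + (k : ℝ) ^ 2) * ‖u t k‖ ^ 2 ≤ (1 + (k : ℝ) ^ 2) * ‖u₀ k‖ ^ 2 :=
    fun k => by
      rw [hmode]
      gcongr
      exact mul_le_of_le_one_right (by positivity)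
        (exp_neg_two_mul_div_le_one (hγ k).le (by positivity) ht.le)
  have hδ_bound : ∀ k : ℤ, (1 + (k : ℝ) ^ 2) * ‖u t k‖ ^ 2 ≤
      exp (-1) / (2 * t) * ((1 + (k : ℝ) ^ 2) ^ 2 / γ k * ‖u₀ k‖ ^ 2) := fun k => by
    rw [hmode, ← mul_assoc]
    exact mul_le_mul_of_nonneg_right
      (mul_exp_neg_two_mul_div_le (hγ k) (by positivity) ht) (by positivity)
  have hsum := hH1.of_nonneg_of_le (fun k => by positivity) hH1_bound
  refine le_min ?_ (hsum.tsum_le_tsum hH1_bound hH1)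
  rw [← tsum_mul_left]
  exact hsum.tsum_le_tsum hδ_bound (hδ.mul_left _)
end

section
/- Let γ_k ∈ (0,1] for all k, s > 0, and u₀ ∈ H_{δ^{(s)}} where δ_k^{(s)} = (1+k²)^{s+1}/γ_k^s. Then the solution of the linear damped BBM equation satisfies ‖u(t)‖_{H¹}² ≤ min( e^{−s}(s/(2t))^s |u₀|_{δ^{(s)}}², ‖u₀‖_{H¹}² ) for all t > 0. -/
/-!
Mode `k` of the solution is damped by `|e^{-(γ_k + ik)t/(1+k²)}|² = e^{-2β_k t}` with
`β_k = γ_k/(1+k²) > 0`. This factor is at most `1`, which gives the `H¹` bound, and raising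
`y e^{-y} ≤ e^{-1}` to the power `s` gives `β^s e^{-2βt} ≤ e^{-s} (s/(2t))^s`; dividing by
`β_k^s` turns the weight `1+k²` into `(1+k²)^{s+1}/γ_k^s = δ_k^{(s)}`.
-/

namespace Real

theorem rpow_mul_exp_neg_mul_le {β c s : ℝ} (hβ : 0 ≤ β) (hc : 0 < c) (hs : 0 < s) :
    β ^ s * exp (-(c * β)) ≤ exp (-s) * (s / c) ^ s := by
  have key : ((c / s * β) * exp (-(c / s * β))) ^ s ≤ exp (-1) ^ s :=
    rpow_le_rpow (by positivity) (mul_exp_neg_le_exp_neg_one _) hs.le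
  rw [mul_rpow (by positivity) (exp_pos _).le, mul_rpow (by positivity) hβ, ← exp_mul, ← exp_mul,
    show -(c / s * β) * s = -(c * β) by field_simp, neg_one_mul] at key
  have hcs : (s / c) ^ s * (c / s) ^ s = 1 := by
    rw [← mul_rpow (by positivity) (by positivity), show s / c * (c / s) = 1 by field_simp,
      one_rpow]
  calc β ^ s * exp (-(c * β)) = (s / c) ^ s * ((c / s) ^ s * β ^ s * exp (-(c * β))) := by
        rw [← mul_assoc, ← mul_assoc, hcs, one_mul]
    _ ≤ (s / c) ^ s * exp (-s) := by gcongr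
    _ = exp (-s) * (s / c) ^ s := mul_comm _ _

end Real

open Complex in
noncomputable def bbmMultiplier (γ k t : ℝ) : ℂ :=
  exp (-((γ + I * k) / (1 + (k : ℂ) ^ 2)) * t)

section BBM

variable {γ k t : ℝ}

open Complex in
theorem norm_bbmMultiplier : ‖bbmMultiplier γ k t‖ = Real.exp (-(γ / (1 + k ^ 2)) * t) := by
  rw [bbmMultiplier, norm_exp, show (1 + (k : ℂ) ^ 2) = ((1 + k ^ 2 : ℝ) : ℂ) by push_cast; ring]
  simp only [neg_mul, neg_re, mul_re, div_ofReal_re, add_re, ofReal_re, ofReal_im, I_re, I_im,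
    div_ofReal_im, add_im, mul_im]
  congr 1
  ring

theorem norm_bbmMultiplier_le_one (hγ : 0 ≤ γ) (ht : 0 ≤ t) : ‖bbmMultiplier γ k t‖ ≤ 1 := by
  rw [norm_bbmMultiplier, Real.exp_le_one_iff, neg_mul, neg_nonpos]
  positivity

theorem one_add_sq_mul_norm_bbmMultiplier_sq_le {s : ℝ} (hγ : 0 < γ) (ht : 0 < t) (hs : 0 < s) :
    (1 + k ^ 2) * ‖bbmMultiplier γ k t‖ ^ 2 ≤
      Real.exp (-s) * (s / (2 * t)) ^ s * ((1 + k ^ 2) ^ (s + 1) / γ ^ s) := by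
  set β := γ / (1 + k ^ 2) with hβ_def
  have hβ : 0 < β := by positivity
  have hdecay := Real.rpow_mul_exp_neg_mul_le hβ.le (by positivity : 0 < 2 * t) hs
  have hsq : ‖bbmMultiplier γ k t‖ ^ 2 = Real.exp (-(2 * t * β)) := by
    rw [norm_bbmMultiplier, ← Real.exp_nat_mul]
    congr 1
    push_cast
    ring
  have hweight : (1 + k ^ 2) / β ^ s = (1 + k ^ 2) ^ (s + 1) / γ ^ s := by
    rw [hβ_def, Real.div_rpow hγ.le (by positivity), Real.rpow_add_one (by positivity)]
    field_simp
  calc (1 + k ^ 2) * ‖bbmMultiplier γ k t‖ ^ 2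
      = (1 + k ^ 2) / β ^ s * (β ^ s * Real.exp (-(2 * t * β))) := by
        rw [hsq]
        field_simp
    _ ≤ (1 + k ^ 2) / β ^ s * (Real.exp (-s) * (s / (2 * t)) ^ s) := by gcongr
    _ = Real.exp (-s) * (s / (2 * t)) ^ s * ((1 + k ^ 2) ^ (s + 1) / γ ^ s) := by
        rw [hweight, mul_comm]

end BBM

theorem tsum_le_tsum_of_nonneg_of_le {ι : Type*} {f g : ι → ℝ} (hg : Summable g)
    (hf : ∀ i, 0 ≤ f i) (hfg : ∀ i, f i ≤ g i) : ∑' i, f i ≤ ∑' i, g i :=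
  (hg.of_nonneg_of_le hf hfg).tsum_mono hg hfg

theorem stmt8_general (γ : ℤ → ℝ) (hγ : ∀ k, 0 < γ k) (s : ℝ) (hs : 0 < s)
    (u : ℝ → ℤ → ℂ) (u₀ : ℤ → ℂ)
    (hsol : ∀ t k, u t k =
      Complex.exp (-(((γ k : ℂ) + Complex.I * (k : ℂ)) / (1 + (k : ℂ) ^ 2)) * t) * u₀ k)
    (hδ : Summable fun k : ℤ => ((1 + (k : ℝ) ^ 2) ^ (s + 1) / γ k ^ s) * ‖u₀ k‖ ^ 2)
    (hH1 : Summable fun k : ℤ => (1 + (k : ℝ) ^ 2) * ‖u₀ k‖ ^ 2) :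
    ∀ t > 0, (∑' k : ℤ, (1 + (k : ℝ) ^ 2) * ‖u t k‖ ^ 2) ≤
      min (Real.exp (-s) * (s / (2 * t)) ^ s *
          ∑' k : ℤ, ((1 + (k : ℝ) ^ 2) ^ (s + 1) / γ k ^ s) * ‖u₀ k‖ ^ 2)
        (∑' k : ℤ, (1 + (k : ℝ) ^ 2) * ‖u₀ k‖ ^ 2) := by
  intro t ht
  have hmode (k : ℤ) : (1 + (k : ℝ) ^ 2) * ‖u t k‖ ^ 2 =
      (1 + (k : ℝ) ^ 2) * ‖bbmMultiplier (γ k) k t‖ ^ 2 * ‖u₀ k‖ ^ 2 := by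
    rw [hsol, bbmMultiplier, norm_mul, mul_pow, mul_assoc]
    push_cast
    rfl
  have hnonneg (k : ℤ) : 0 ≤ (1 + (k : ℝ) ^ 2) * ‖u t k‖ ^ 2 := by positivity
  have hH1_mode (k : ℤ) : (1 + (k : ℝ) ^ 2) * ‖u t k‖ ^ 2 ≤ (1 + (k : ℝ) ^ 2) * ‖u₀ k‖ ^ 2 := by
    rw [hmode]
    gcongr
    exact mul_le_of_le_one_right (by positivity)
      (pow_le_one₀ (norm_nonneg _) (norm_bbmMultiplier_le_one (hγ k).le ht.le))
  have hδ_mode (k : ℤ) : (1 + (k : ℝ) ^ 2) * ‖u t k‖ ^ 2 ≤ Real.exp (-s) * (s / (2 * t)) ^ s *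
      (((1 + (k : ℝ) ^ 2) ^ (s + 1) / γ k ^ s) * ‖u₀ k‖ ^ 2) := by
    rw [hmode, ← mul_assoc]
    exact mul_le_mul_of_nonneg_right (one_add_sq_mul_norm_bbmMultiplier_sq_le (hγ k) ht hs)
      (by positivity)
  refine le_min ?_ (tsum_le_tsum_of_nonneg_of_le hH1 hnonneg hH1_mode)
  rw [← tsum_mul_left]
  exact tsum_le_tsum_of_nonneg_of_le (hδ.mul_left _) hnonneg hδ_mode

/-- With `γ k ∈ (0,1]`, `s > 0` and `u₀ ∈ H_{δ⁽ˢ⁾}`,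
`δ⁽ˢ⁾ k = (1+k²)^{s+1}/γ k ^ s`, the mode-wise solution of linear damped BBM satisfies
`‖u(t)‖_{H¹}² ≤ min(e^{-s} (s/(2t))^s |u₀|_{δ⁽ˢ⁾}², ‖u₀‖_{H¹}²)` for all `t > 0`. -/
theorem stmt8 (γ : ℤ → ℝ) (hγ : ∀ k, 0 < γ k) (hγ1 : ∀ k, γ k ≤ 1) (s : ℝ) (hs : 0 < s)
    (u : ℝ → ℤ → ℂ) (u₀ : ℤ → ℂ)
    (hsol : ∀ t k, u t k =
      Complex.exp (-(((γ k : ℂ) + Complex.I * (k : ℂ)) / (1 + (k : ℂ) ^ 2)) * t) * u₀ k)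
    (hδ : Summable fun k : ℤ => ((1 + (k : ℝ) ^ 2) ^ (s + 1) / γ k ^ s) * ‖u₀ k‖ ^ 2)
    (hH1 : Summable fun k : ℤ => (1 + (k : ℝ) ^ 2) * ‖u₀ k‖ ^ 2) :
    ∀ t > 0, (∑' k : ℤ, (1 + (k : ℝ) ^ 2) * ‖u t k‖ ^ 2) ≤
      min (Real.exp (-s) * (s / (2 * t)) ^ s *
          ∑' k : ℤ, ((1 + (k : ℝ) ^ 2) ^ (s + 1) / γ k ^ s) * ‖u₀ k‖ ^ 2)
        (∑' k : ℤ, (1 + (k : ℝ) ^ 2) * ‖u₀ k‖ ^ 2) :=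
  stmt8_general γ hγ s hs u u₀ hsol hδ hH1
end

section
/- Suppose there exist α, β, C > 0 with δ = α + β such that |û₀(k)|² ≤ C γ_k^{2δ} for all k and ∑_{k∈ℤ}(1+k²)^{2α+1} γ_k^{2β} < ∞. Then the solution of the linear damped BBM equation satisfies ‖u(t)‖_{H¹}² ≤ C e^{−2α}(α/t)^{2α} ∑_{k∈ℤ}(1+k²)^{2α+1} γ_k^{2β}, i.e. ‖u(t)‖_{H¹}² = O(t^{−2α}). -/
/-!
Mode by mode, `‖u t k‖² = e^{-2 γ_k t / (1 + k²)} ‖u₀ k‖²`. The elementary bound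
`e^{-s} ≤ e^{-a} (a / s)^a` (the maximum of `s ↦ s^a e^{-s}` is at `s = a`), applied with
`a = 2α` and `s = 2 γ_k t / (1 + k²)`, trades the exponential for
`e^{-2α} (α (1 + k²) / (t γ_k))^{2α}`; the initial-data bound absorbs `γ_k^{-2α}`, and the
remaining weights `(1 + k²)^{2α + 1} γ_k^{2β}` are summable by hypothesis.
-/

open Real

theorem exp_neg_le_exp_neg_mul_div_rpow {a s : ℝ} (ha : 0 < a) (hs : 0 < s) :
    exp (-s) ≤ exp (-a) * (a / s) ^ a := by
  have hlog : log (s / a) ≤ s / a - 1 := log_le_sub_one_of_pos (by positivity)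
  rw [rpow_def_of_pos (by positivity), ← exp_add, exp_le_exp, ← inv_div, log_inv]
  have hscale : a * (s / a - 1) = s - a := by field_simp
  nlinarith [mul_le_mul_of_nonneg_left hlog ha.le]

theorem norm_cexp_neg_div_ofReal_mul (z : ℂ) (r t : ℝ) :
    ‖Complex.exp (-(z / r) * t)‖ = exp (-(z.re * t / r)) := by
  rw [Complex.norm_exp]
  simp [Complex.div_ofReal_re]
  ring

theorem mul_sq_exp_neg_mul_le {r g t α β C n : ℝ} (hr : 0 < r) (hg : 0 < g) (ht : 0 < t)
    (hα : 0 < α) (hn : n ^ 2 ≤ C * g ^ (2 * (α + β))) :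
    r * (exp (-(g * t / r)) * n) ^ 2 ≤
      C * exp (-2 * α) * (α / t) ^ (2 * α) * (r ^ (2 * α + 1) * g ^ (2 * β)) := by
  have hdecay : exp (-(g * t / r)) ^ 2 ≤ exp (-2 * α) * (α / t * (r / g)) ^ (2 * α) := by
    have h := exp_neg_le_exp_neg_mul_div_rpow (a := 2 * α) (s := 2 * (g * t / r))
      (by positivity) (by positivity)
    rw [show 2 * α / (2 * (g * t / r)) = α / t * (r / g) by field_simp] at h
    rw [← exp_nat_mul, neg_mul]
    convert h using 2
    push_cast
    ring
  calc r * (exp (-(g * t / r)) * n) ^ 2 = r * exp (-(g * t / r)) ^ 2 * n ^ 2 := by ring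
    _ ≤ r * (exp (-2 * α) * (α / t * (r / g)) ^ (2 * α)) * (C * g ^ (2 * (α + β))) := by
      gcongr
    _ = _ := by
      rw [mul_rpow (by positivity) (by positivity), div_rpow hr.le hg.le, mul_add,
        rpow_add hg, rpow_add hr, rpow_one]
      field_simp [(rpow_pos_of_pos hg (2 * α)).ne']

theorem stmt9_general (γ : ℤ → ℝ) (hγ : ∀ k, 0 < γ k) (α β C : ℝ)
    (hα : 0 < α)
    (u : ℝ → ℤ → ℂ) (u₀ : ℤ → ℂ)
    (hsol : ∀ t k, u t k =
      Complex.exp (-(((γ k : ℂ) + Complex.I * (k : ℂ)) / (1 + (k : ℂ) ^ 2)) * t) * u₀ k)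
    (hinit : ∀ k, ‖u₀ k‖ ^ 2 ≤ C * γ k ^ (2 * (α + β)))
    (hsum : Summable fun k : ℤ => (1 + (k : ℝ) ^ 2) ^ (2 * α + 1) * γ k ^ (2 * β)) :
    ∀ t > 0, (∑' k : ℤ, (1 + (k : ℝ) ^ 2) * ‖u t k‖ ^ 2) ≤
      C * Real.exp (-2 * α) * (α / t) ^ (2 * α) *
        ∑' k : ℤ, (1 + (k : ℝ) ^ 2) ^ (2 * α + 1) * γ k ^ (2 * β) := by
  intro t ht
  have hmode (k : ℤ) : (1 + (k : ℝ) ^ 2) * ‖u t k‖ ^ 2 ≤ C * exp (-2 * α) * (α / t) ^ (2 * α) *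
      ((1 + (k : ℝ) ^ 2) ^ (2 * α + 1) * γ k ^ (2 * β)) := by
    have hnorm : ‖u t k‖ = exp (-(γ k * t / (1 + (k : ℝ) ^ 2))) * ‖u₀ k‖ := by
      rw [hsol, norm_mul, show (1 + (k : ℂ) ^ 2) = ((1 + (k : ℝ) ^ 2 : ℝ) : ℂ) by push_cast; rfl,
        norm_cexp_neg_div_ofReal_mul]
      simp
    rw [hnorm]
    exact mul_sq_exp_neg_mul_le (by positivity) (hγ k) ht hα (hinit k)
  have hweighted := hsum.mul_left (C * exp (-2 * α) * (α / t) ^ (2 * α))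
  rw [← tsum_mul_left]
  exact (hweighted.of_nonneg_of_le (fun k => by positivity) hmode).tsum_le_tsum hmode hweighted

/-- If `|û₀ k|² ≤ C γ k ^{2δ}` with `δ = α + β` and
`∑ (1+k²)^{2α+1} γ k ^{2β} < ∞`, then the mode-wise solution of linear damped BBM satisfies
`‖u(t)‖_{H¹}² ≤ C e^{-2α} (α/t)^{2α} ∑ (1+k²)^{2α+1} γ k^{2β} = O(t^{-2α})`. -/
theorem stmt9 (γ : ℤ → ℝ) (hγ : ∀ k, 0 < γ k) (α β C : ℝ)
    (hα : 0 < α) (hβ : 0 < β) (hC : 0 < C)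
    (u : ℝ → ℤ → ℂ) (u₀ : ℤ → ℂ)
    (hsol : ∀ t k, u t k =
      Complex.exp (-(((γ k : ℂ) + Complex.I * (k : ℂ)) / (1 + (k : ℂ) ^ 2)) * t) * u₀ k)
    (hinit : ∀ k, ‖u₀ k‖ ^ 2 ≤ C * γ k ^ (2 * (α + β)))
    (hsum : Summable fun k : ℤ => (1 + (k : ℝ) ^ 2) ^ (2 * α + 1) * γ k ^ (2 * β)) :
    ∀ t > 0, (∑' k : ℤ, (1 + (k : ℝ) ^ 2) * ‖u t k‖ ^ 2) ≤
      C * Real.exp (-2 * α) * (α / t) ^ (2 * α) *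
        ∑' k : ℤ, (1 + (k : ℝ) ^ 2) ^ (2 * α + 1) * γ k ^ (2 * β) :=
  stmt9_general γ hγ α β C hα u u₀ hsol hinit hsum
end

section
/- Let u solve the damped BBM equation and define G(t) = |u(t)|_γ / ‖u(t)‖_{H¹} (for u(t) ≠ 0). Then ‖u(t)‖_{H¹}² = e^{−2∫₀^t G²(s)ds} ‖u₀‖_{H¹}² and |u(t)|_γ² = G²(t) e^{−2∫₀^t G²(s)ds} ‖u₀‖_{H¹}². In particular ‖u(t)‖_{H¹} → 0 as t → ∞ if and only if G ∉ L²(0,∞). -/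
/-!
Since `g = G² N`, the energy identity is the linear equation `N' = -2 G² N`, whose solution is
`N t = exp (-2 ∫₀ᵗ G²) N 0`. As `G² ≥ 0`, the exponent decreases monotonically, and it tends to
`-∞` exactly when `∫₀^∞ G² = ∞`.
-/

open MeasureTheory Filter Real intervalIntegral

theorem eq_exp_integral_mul_of_hasDerivAt {N a : ℝ → ℝ} (ha : Continuous a)
    (hN : ∀ t, HasDerivAt N (a t * N t) t) (t : ℝ) :
    N t = exp (∫ s in (0 : ℝ)..t, a s) * N 0 := by
  set A : ℝ → ℝ := fun t => ∫ s in (0 : ℝ)..t, a s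
  have hA : ∀ t, HasDerivAt A (a t) t := fun t =>
    integral_hasDerivAt_right (ha.intervalIntegrable _ _)
      ha.aestronglyMeasurable.stronglyMeasurableAtFilter ha.continuousAt
  have hconst : ∀ t, HasDerivAt (fun t => N t * exp (-A t)) 0 t := fun t =>
    ((hN t).mul (hA t).neg.exp).congr_deriv (by ring)
  have h := is_const_of_deriv_eq_zero (fun t => (hconst t).differentiableAt)
    (fun t => (hconst t).deriv) t 0
  simp only [A, integral_same, neg_zero, exp_zero, mul_one] at h
  rw [← h, mul_left_comm, ← exp_add, add_neg_cancel, exp_zero, mul_one]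

theorem tendsto_intervalIntegral_atTop_iff_not_integrableOn_Ici {f : ℝ → ℝ} (hf : Continuous f)
    (hf_nonneg : ∀ x, 0 ≤ f x) (a : ℝ) :
    Tendsto (fun t => ∫ s in a..t, f s) atTop atTop ↔ ¬ IntegrableOn f (Set.Ici a) := by
  rw [integrableOn_Ici_iff_integrableOn_Ioi]
  constructor
  · intro htop hint
    exact not_tendsto_nhds_of_tendsto_atTop htop _
      (intervalIntegral_tendsto_integral_Ioi a hint tendsto_id)
  · intro hint
    have hmono : Monotone fun t => ∫ s in a..t, f s := fun s t hst => by
      rw [← sub_nonneg, integral_interval_sub_left (hf.intervalIntegrable _ _)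
        (hf.intervalIntegrable _ _)]
      exact integral_nonneg hst fun x _ => hf_nonneg x
    refine tendsto_atTop_atTop_of_monotone' hmono fun ⟨C, hC⟩ => hint ?_
    refine integrableOn_Ioi_of_intervalIntegral_norm_bounded C a
      (fun _ => hf.integrableOn_Ioc) tendsto_id (Eventually.of_forall fun t => ?_)
    simp only [id, norm_of_nonneg (hf_nonneg _)]
    exact hC (Set.mem_range_self t)

theorem tendsto_exp_const_mul_mul_const_nhds_zero_iff {α : Type*} {l : Filter α} {F : α → ℝ}
    {r c : ℝ} (hr : r < 0) (hc : c ≠ 0) :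
    Tendsto (fun x => exp (r * F x) * c) l (nhds 0) ↔ Tendsto F l atTop := by
  have hmul : Tendsto (fun x => exp (r * F x) * c) l (nhds 0) ↔
      Tendsto (fun x => exp (r * F x)) l (nhds 0) :=
    ⟨fun h => by simpa [hc] using h.mul_const c⁻¹, fun h => by simpa using h.mul_const c⟩
  rw [hmul, tendsto_exp_comp_nhds_zero, tendsto_const_mul_atBot_of_neg hr]

/-- Let `u` solve damped BBM, `N t = ‖u(t)‖_{H¹}²`, `g t = |u(t)|_γ²`,
and `G t = |u(t)|_γ/‖u(t)‖_{H¹}` (C¹), with the energy identity `(1/2)N' + g = 0`. Then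
`N t = e^{-2∫₀ᵗ G²} N 0`, `g t = G(t)² e^{-2∫₀ᵗ G²} N 0`, and `N → 0` at infinity iff
`G ∉ L²(0,∞)`. -/
theorem stmt15 (N g G : ℝ → ℝ)
    (hNpos : ∀ t, 0 < N t) (hgnn : ∀ t, 0 ≤ g t)
    (hG : ∀ t, G t = Real.sqrt (g t) / Real.sqrt (N t))
    (hGC1 : ContDiff ℝ 1 G)
    (henergy : ∀ t, HasDerivAt N (-2 * g t) t) :
    (∀ t, N t = Real.exp (-2 * ∫ s in (0 : ℝ)..t, G s ^ 2) * N 0) ∧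
    (∀ t, g t = G t ^ 2 * Real.exp (-2 * ∫ s in (0 : ℝ)..t, G s ^ 2) * N 0) ∧
    (Filter.Tendsto N Filter.atTop (nhds 0) ↔
      ¬ IntegrableOn (fun s => G s ^ 2) (Set.Ici (0 : ℝ)) volume) := by
  have hG2 : Continuous fun s => G s ^ 2 := hGC1.continuous.pow 2
  have hg : ∀ t, g t = G t ^ 2 * N t := fun t => by
    rw [hG t, div_pow, sq_sqrt (hgnn t), sq_sqrt (hNpos t).le,
      div_mul_cancel₀ _ (hNpos t).ne']
  have hN : ∀ t, N t = exp (-2 * ∫ s in (0 : ℝ)..t, G s ^ 2) * N 0 := fun t => by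
    rw [← intervalIntegral.integral_const_mul]
    refine eq_exp_integral_mul_of_hasDerivAt (a := fun s => -2 * G s ^ 2) (by fun_prop) (fun t => ?_) t
    simpa only [hg, mul_assoc] using henergy t
  refine ⟨hN, fun t => by rw [hg, hN t, mul_assoc], ?_⟩
  rw [← tendsto_intervalIntegral_atTop_iff_not_integrableOn_Ici hG2 (fun s => sq_nonneg _),
    tendsto_congr hN]
  exact tendsto_exp_const_mul_mul_const_nhds_zero_iff (by norm_num) (hNpos 0).ne'
end

section
/- Let u solve the forced damped BBM equation u_t − u_{txx} + u_x + uu_x + L_γ(u) = f with f ∈ H_{1/γ}(𝕋) and u₀ ∈ H¹ ∩ H_γ. With G(t) = |u(t)|_γ/‖u(t)‖_{H¹}, the solution satisfies ‖u(t)‖_{H¹}² ≤ e^{−∫₀^t G²(s)ds} ‖u₀‖_{H¹}² + ∫₀^t e^{−∫_s^t G²(τ)dτ} |f|_{1/γ}² ds. -/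
set_option maxHeartbeats 1000000


/-- For the forced damped BBM equation with `f ∈ H_{1/γ}` (so
`F = |f|_{1/γ}²`), the energy identity `(1/2)N' + g = ⟨f,u⟩` with
`|⟨f,u⟩| ≤ |f|_{1/γ} |u|_γ` and `g = G² N` yields, via Young and Grönwall,
`N t ≤ e^{-∫₀ᵗ G²} N 0 + ∫₀ᵗ e^{-∫ₛᵗ G²} F ds` for all `t ≥ 0`. -/
theorem stmt16 (N g G P : ℝ → ℝ) (F : ℝ)
    (hF : 0 ≤ F) (hgnn : ∀ t, 0 ≤ g t) (hNpos : ∀ t, 0 < N t)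
    (hG : ∀ t, g t = G t ^ 2 * N t)
    (henergy : ∀ t, HasDerivAt N (2 * (P t - g t)) t)
    (hCS : ∀ t, |P t| ≤ Real.sqrt F * Real.sqrt (g t))
    (hGc : Continuous G) :
    ∀ t ≥ (0 : ℝ), N t ≤ Real.exp (-∫ s in (0 : ℝ)..t, G s ^ 2) * N 0 +
      ∫ s in (0 : ℝ)..t, Real.exp (-∫ τ in s..t, G τ ^ 2) * F := by
  intro t ht
  set h : ℝ → ℝ := fun s => G s ^ 2 with hh
  have hc : Continuous h := (hGc.pow 2)
  set A : ℝ → ℝ := fun t => ∫ s in (0:ℝ)..t, h s with hA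
  have hA' : ∀ x, HasDerivAt A (h x) x := fun x =>
    intervalIntegral.integral_hasDerivAt_right (hc.intervalIntegrable _ _)
      (hc.stronglyMeasurableAtFilter _ _) hc.continuousAt
  have hAc : Continuous A := by
    rw [continuous_iff_continuousAt]; exact fun x => (hA' x).continuousAt
  set b : ℝ → ℝ := fun s => F * Real.exp (A s) with hb
  have hbc : Continuous b := continuous_const.mul (Real.continuous_exp.comp hAc)
  set z : ℝ → ℝ := fun s => N s * Real.exp (A s) - ∫ r in (0:ℝ)..s, b r with hz
  have hz' : ∀ x, HasDerivAt z
      ((2 * (P x - g x)) * Real.exp (A x) + N x * (Real.exp (A x) * h x) - b x) x := by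
    intro x
    exact ((henergy x).mul ((hA' x).exp)).sub
      (intervalIntegral.integral_hasDerivAt_right (hbc.intervalIntegrable _ _)
        (hbc.stronglyMeasurableAtFilter _ _) hbc.continuousAt)
  have hanti : Antitone z := by
    refine antitone_of_hasDerivAt_nonpos hz' ?_
    intro x
    have hexp : 0 < Real.exp (A x) := Real.exp_pos _
    have hyoung : 2 * P x ≤ F + g x := by
      have h1 : P x ≤ Real.sqrt F * Real.sqrt (g x) := (le_abs_self _).trans (hCS x)
      have h2 : 2 * (Real.sqrt F * Real.sqrt (g x)) ≤
          Real.sqrt F ^ 2 + Real.sqrt (g x) ^ 2 := by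
        nlinarith [sq_nonneg (Real.sqrt F - Real.sqrt (g x))]
      rw [Real.sq_sqrt hF, Real.sq_sqrt (hgnn x)] at h2
      linarith
    have hgh : N x * h x = g x := by rw [hG x]; ring
    have : (2 * (P x - g x)) + N x * h x ≤ F := by
      rw [hgh]; linarith
    have : ((2 * (P x - g x)) + N x * h x) * Real.exp (A x) ≤ F * Real.exp (A x) :=
      mul_le_mul_of_nonneg_right this hexp.le
    simp only [Pi.le_def, hb]
    calc (2 * (P x - g x)) * Real.exp (A x) + N x * (Real.exp (A x) * h x)
          - F * Real.exp (A x)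
        = ((2 * (P x - g x)) + N x * h x) * Real.exp (A x) - F * Real.exp (A x) := by ring
      _ ≤ 0 := by linarith
  have hzt : z t ≤ z 0 := hanti ht
  have hz0 : z 0 = N 0 := by
    simp only [hz, hA, intervalIntegral.integral_same, Real.exp_zero, mul_one, sub_zero]
  rw [hz0] at hzt
  -- rewrite the goal's inner integral
  have hAsub : ∀ s, (∫ τ in s..t, h τ) = A t - A s := by
    intro s
    have h2 : (∫ τ in (0:ℝ)..s, h τ) + (∫ τ in s..t, h τ) = ∫ τ in (0:ℝ)..t, h τ :=
      intervalIntegral.integral_add_adjacent_intervals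
        (hc.intervalIntegrable 0 s) (hc.intervalIntegrable s t)
    have hAs : A s = ∫ τ in (0:ℝ)..s, h τ := rfl
    have hAt : A t = ∫ τ in (0:ℝ)..t, h τ := rfl
    rw [hAs, hAt]
    linarith
  have hgoal_int : (∫ s in (0:ℝ)..t, Real.exp (-∫ τ in s..t, h τ) * F)
      = Real.exp (-A t) * ∫ r in (0:ℝ)..t, b r := by
    rw [← intervalIntegral.integral_const_mul]
    refine intervalIntegral.integral_congr fun s _ => ?_
    rw [hAsub s, hb]
    rw [neg_sub, Real.exp_sub]
    rw [Real.exp_neg]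
    field_simp
  rw [hgoal_int]
  have hexp : 0 < Real.exp (A t) := Real.exp_pos _
  have key : N t * Real.exp (A t) ≤ N 0 + ∫ r in (0:ℝ)..t, b r := by
    simpa [hz, sub_le_iff_le_add] using hzt
  have hne : Real.exp (-A t) = (Real.exp (A t))⁻¹ := Real.exp_neg _
  rw [hne]
  have := mul_le_mul_of_nonneg_right key (le_of_lt (inv_pos.2 hexp))
  calc N t = N t * Real.exp (A t) * (Real.exp (A t))⁻¹ := by field_simp
    _ ≤ (N 0 + ∫ r in (0:ℝ)..t, b r) * (Real.exp (A t))⁻¹ := this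
    _ = (Real.exp (A t))⁻¹ * N 0 + (Real.exp (A t))⁻¹ * ∫ r in (0:ℝ)..t, b r := by ring
end
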